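/- Fix φ ∈ Φ* with |φ| = 1, let λ be a partition of m, and set n = m. Then ⟨S_{λ_1}(φ)⋯S_{λ_l}(φ)·1, Q_n·1⟩ = (−1)^{m+n} if λ = (1^m) is a single column, and 0 otherwise. (This matrix coefficient equals the irreducible character value χ^{λ(φ)}_{(n)(f_1)} of GL_n(𝔽_q) at the regular unipotent class.) -/

import Mathlib

open MvPolynomial

noncomputable section

namespace JW

/-! ## Generic formal exponential of a power series

For a power series `S` with zero constant term, `expOf 𝕜 S` is the formal
exponential `exp S = ∑_j S^j / j!`; its `z^r`-coefficient is the (finite) sum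
`∑_{j ≤ r} (coeff r S^j)/j!`. -/
def expOf (𝕜 : Type) [Field 𝕜] {A : Type} [Ring A] [Algebra 𝕜 A]
    (S : PowerSeries A) : PowerSeries A :=
  PowerSeries.mk fun r => ∑ j ∈ Finset.range (r + 1),
    ((Nat.factorial j : 𝕜))⁻¹ • (PowerSeries.coeff r (S ^ j))

/-! ## The field 𝔽̄_q, Frobenius, characters, and orbits -/

variable (p k : ℕ) [Fact p.Prime]

/-- The algebraic closure `𝔽̄_q` of `𝔽_q ⊆ 𝔽̄_p`, realized as `𝔽̄_p`. -/
abbrev Kbar := AlgebraicClosure (ZMod p)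

/-- The Frobenius `x ↦ x^q`, `q = p^k`, on the multiplicative group `M = 𝔽̄_q^×`. -/
def frobM : (Kbar p)ˣ →* (Kbar p)ˣ := powMonoidHom (p ^ k)

/-- `M*`: complex characters of `M = 𝔽̄_q^×` fixed by some power of Frobenius. -/
def Mstar : Type :=
  {ξ : (Kbar p)ˣ →* ℂˣ // ∃ d : ℕ, 0 < d ∧ ∀ x, ξ ((⇑(frobM p k))^[d] x) = ξ x}

/-- The Frobenius action `ξ ↦ ξ ∘ F` on `M*`. -/
def frobStar (ξ : Mstar p k) : Mstar p k :=
  ⟨ξ.1.comp (frobM p k), by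
    obtain ⟨d, hd, h⟩ := ξ.2
    refine ⟨d, hd, fun x => ?_⟩
    have h1 : (⇑(frobM p k))^[d] (frobM p k x) = frobM p k ((⇑(frobM p k))^[d] x) := by
      rw [← Function.iterate_succ_apply, Function.iterate_succ_apply']
    simp only [MonoidHom.comp_apply]
    rw [← h1, h]⟩

/-- Two periodic characters are equivalent iff they lie in the same `F`-orbit. -/
def MstarSetoid : Setoid (Mstar p k) where
  r ξ ψ := ∃ a b : ℕ, (frobStar p k)^[a] ξ = (frobStar p k)^[b] ψ
  iseqv := by
    refine ⟨fun ξ => ⟨0, 0, rfl⟩, ?_, ?_⟩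
    · rintro ξ ψ ⟨a, b, h⟩; exact ⟨b, a, h.symm⟩
    · rintro ξ ψ χ ⟨a, b, h⟩ ⟨c, e, h'⟩
      refine ⟨c + a, b + e, ?_⟩
      rw [Function.iterate_add_apply, h, ← Function.iterate_add_apply, Nat.add_comm c b,
        Function.iterate_add_apply, h', ← Function.iterate_add_apply]

/-- `Φ*`: the set of `F`-orbits of characters. -/
abbrev PhiStar := Quotient (MstarSetoid p k)

/-- The orbit of a character. -/
def mkS (ξ : Mstar p k) : PhiStar p k := Quotient.mk (MstarSetoid p k) ξ

/-- `|φ|`: the cardinality of the orbit `φ ∈ Φ*`. -/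
def degS (φ : PhiStar p k) : ℕ := Nat.card {ξ : Mstar p k // mkS p k ξ = φ}

/-- Same-orbit equivalence on `M = 𝔽̄_q^×` itself. -/
def MSetoid : Setoid ((Kbar p)ˣ) where
  r x y := ∃ a b : ℕ, (⇑(frobM p k))^[a] x = (⇑(frobM p k))^[b] y
  iseqv := by
    refine ⟨fun x => ⟨0, 0, rfl⟩, ?_, ?_⟩
    · rintro x y ⟨a, b, h⟩; exact ⟨b, a, h.symm⟩
    · rintro x y z ⟨a, b, h⟩ ⟨c, e, h'⟩
      refine ⟨c + a, b + e, ?_⟩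
      rw [Function.iterate_add_apply, h, ← Function.iterate_add_apply, Nat.add_comm c b,
        Function.iterate_add_apply, h', ← Function.iterate_add_apply]

/-- `Φ`: the set of `F`-orbits in `M` (equivalently, monic irreducible
polynomials over `𝔽_q` other than `t`). -/
abbrev PhiM := Quotient (MSetoid p k)

/-- The orbit of an element of `M`. -/
def mkM (x : (Kbar p)ˣ) : PhiM p k := Quotient.mk (MSetoid p k) x

/-- `|f|`: the cardinality (degree) of the orbit `f ∈ Φ`. -/
def degM (f : PhiM p k) : ℕ := Nat.card {x : (Kbar p)ˣ // mkM p k x = f}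

/-! ## The Fock space -/

/-- The Fock space `𝓕 = ℂ[p_n(φ) : n ≥ 1, φ ∈ Φ*]`. -/
abbrev Fock := MvPolynomial (PhiStar p k × ℕ+) ℂ

/-- The power sum generator `p_n(φ)` (zero for `n = 0`). -/
def pGen (φ : PhiStar p k) (n : ℕ) : Fock p k :=
  if h : 0 < n then X (φ, ⟨n, h⟩) else 0

/-- `q = p^k` as a complex number. -/
def qC : ℂ := (p : ℂ) ^ k

/-- `Z`-value of a colored power-sum monomial: for the monomial with
multiplicity `m (φ,n)` of `p_n(φ)`, this is `∏ n^{m(φ,n)} (m(φ,n))!`. -/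
def Zval (m : (PhiStar p k × ℕ+) →₀ ℕ) : ℂ :=
  ∏ i ∈ m.support, ((i.2 : ℕ) : ℂ) ^ (m i) * (Nat.factorial (m i))

/-- The symmetric bilinear form on `𝓕` with
`⟨p_{λ̃}, p_{μ̃}⟩ = δ_{λ̃ μ̃} ∏_φ z_{λ̃(φ)}`. -/
def form (u v : Fock p k) : ℂ :=
  ∑ m ∈ u.support, coeff m u * coeff m v * Zval p k m

/-- `p_n(f_1)` for `f_1 = t - 1`:
`p_n(f_1) = ((−1)^{n−1}/(q^n−1)) ∑_{|φ| ∣ n} |φ| p_{n/|φ|}(φ)`. -/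
def pF1 (n : ℕ) : Fock p k :=
  ((-1 : ℂ) ^ (n - 1) / (qC p k ^ n - 1)) •
    ∑ᶠ (φ : PhiStar p k) (_ : degS p k φ ∣ n),
      (degS p k φ : ℂ) • pGen p k φ (n / degS p k φ)

/-- The derivative `∂/∂p_n(φ)` (zero for `n = 0`). -/
def derOp (φ : PhiStar p k) (n : ℕ) : Module.End ℂ (Fock p k) :=
  if h : 0 < n then (pderiv ((φ, ⟨n, h⟩) : PhiStar p k × ℕ+)).toLinearMap else 0

/-- Multiplication operator by a fixed element of `𝓕`. -/
def mulOp (f : Fock p k) : Module.End ℂ (Fock p k) := LinearMap.mulLeft ℂ f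

/-! ## Vertex operators as coefficients of products of exponentials -/

/-- `exp(∑_{n≥1} (1/n) p_n(φ) z^n)` as a power series with coefficients in `𝓕`. -/
def hSeries (φ : PhiStar p k) : PowerSeries (Fock p k) :=
  expOf ℂ (PowerSeries.mk fun n => ((n : ℂ))⁻¹ • pGen p k φ n)

/-- The coefficients of `hSeries`, extended by `0` to negative indices. -/
def hElt (φ : PhiStar p k) (a : ℤ) : Fock p k :=
  if 0 ≤ a then PowerSeries.coeff a.toNat (hSeries p k φ) else 0

/-- `exp(−∑_{n≥1} ∂/∂p_n(φ) z^{-n})`: the coefficient of `z^{-r}` is the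
`r`-th coefficient of this power series. -/
def sMinusSeries (φ : PhiStar p k) : PowerSeries (Module.End ℂ (Fock p k)) :=
  expOf ℂ (PowerSeries.mk fun n => -(derOp p k φ n))

/-- `S` is the family of Schur vertex operator coefficients:
`S(φ;z) = exp(∑ (1/n)p_n(φ) z^n) exp(−∑ ∂/∂p_n(φ) z^{-n}) = ∑_m S_m(φ) z^m`. -/
def IsSOp (S : PhiStar p k → ℤ → Module.End ℂ (Fock p k)) : Prop :=
  ∀ (φ : PhiStar p k) (m : ℤ) (v : Fock p k),
    S φ m v = ∑ᶠ r : ℕ,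
      hElt p k φ (m + r) * (PowerSeries.coeff r (sMinusSeries p k φ) v)

/-- `D n` is `((q^n−1)/n)` times the `⟨·,·⟩`-adjoint of multiplication
by `p_n(f_1)`. -/
def IsD (D : ℕ → Module.End ℂ (Fock p k)) : Prop :=
  ∀ n : ℕ, 0 < n → ∀ u v : Fock p k,
    form p k (D n u) v = ((qC p k ^ n - 1) / n) * form p k u (pF1 p k n * v)

/-- `exp(−∑_{n≥1} ((1−q^{-n})/n) p_n(f_1) z^n)`. -/
def qStarPlusSeries : PowerSeries (Fock p k) :=
  expOf ℂ (PowerSeries.mk fun n => (-((1 - (qC p k)⁻¹ ^ n) / n)) • pF1 p k n)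

/-- `exp(∑_{n≥1} D_n z^{-n})`: coefficient of `z^{-b}` is the `b`-th coefficient. -/
def qStarMinusSeries (D : ℕ → Module.End ℂ (Fock p k)) :
    PowerSeries (Module.End ℂ (Fock p k)) :=
  expOf ℂ (PowerSeries.mk fun n => if n = 0 then 0 else D n)

/-- `Qs` is the family of coefficients of the dual Hall–Littlewood vertex operator:
`Q*(z) = exp(−∑ ((1−q^{-n})/n) p_n(f_1) z^n) exp(∑ D_n z^{-n}) = ∑_m Q*_m z^{-m}`. -/
def IsQStar (D : ℕ → Module.End ℂ (Fock p k))
    (Qs : ℤ → Module.End ℂ (Fock p k)) : Prop :=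
  ∀ (m : ℤ) (v : Fock p k),
    Qs m v = ∑ᶠ a : ℕ,
      PowerSeries.coeff a (qStarPlusSeries p k) *
        (if h : (0 : ℤ) ≤ (a : ℤ) + m then
          PowerSeries.coeff ((a : ℤ) + m).toNat (qStarMinusSeries p k D) v
        else 0)

/-- `exp(∑_{n≥1} ((q^n−1)/n) p_n(f_1) z^n)`. -/
def qPlusSeries : PowerSeries (Fock p k) :=
  expOf ℂ (PowerSeries.mk fun n => ((qC p k ^ n - 1) / n) • pF1 p k n)

/-- Coefficients of `qPlusSeries`, extended by `0` to negative indices. -/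
def qPlusElt (a : ℤ) : Fock p k :=
  if 0 ≤ a then PowerSeries.coeff a.toNat (qPlusSeries p k) else 0

/-- `exp(−∑_{n≥1} q^{-n} D_n z^{-n})`. -/
def qMinusSeries (D : ℕ → Module.End ℂ (Fock p k)) :
    PowerSeries (Module.End ℂ (Fock p k)) :=
  expOf ℂ (PowerSeries.mk fun n => if n = 0 then 0 else (-((qC p k)⁻¹ ^ n)) • D n)

/-- `Q` is the family of coefficients of the Hall–Littlewood vertex operator:
`Q(z) = exp(∑ ((q^n−1)/n) p_n(f_1) z^n) exp(−∑ q^{-n} D_n z^{-n}) = ∑_m Q_m z^m`. -/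
def IsQ (D : ℕ → Module.End ℂ (Fock p k))
    (Q : ℤ → Module.End ℂ (Fock p k)) : Prop :=
  ∀ (m : ℤ) (v : Fock p k),
    Q m v = ∑ᶠ b : ℕ,
      qPlusElt p k (m + b) * (PowerSeries.coeff b (qMinusSeries p k D) v)

/-! ## `f`-colored power sums and Hall–Littlewood operators, `f ∈ Φ` -/

/-- Characters fixed by the `d`-th power of Frobenius (i.e. `M*_d`). -/
def MstarLevel (d : ℕ) : Set (Mstar p k) :=
  {ξ | ∀ y, ξ.1 ((⇑(frobM p k))^[d] y) = ξ.1 y}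

/-- `p_n(f)` computed from a chosen representative `x` of the orbit `f`:
`p_n(f) = ((−1)^{n|f|−1}/(q^{n|f|}−1)) ∑_{ξ ∈ M*_{n|f|}} ξ(x)^{-1} p_{n|f|/|φ_ξ|}(φ_ξ)`. -/
def pFrep (x : (Kbar p)ˣ) (n : ℕ) : Fock p k :=
  ((-1 : ℂ) ^ (n * degM p k (mkM p k x) - 1) / (qC p k ^ (n * degM p k (mkM p k x)) - 1)) •
    ∑ᶠ (ξ : Mstar p k) (_ : ξ ∈ MstarLevel p k (n * degM p k (mkM p k x))),
      (((ξ.1 x : ℂˣ) : ℂ))⁻¹ •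
        pGen p k (mkS p k ξ) ((n * degM p k (mkM p k x)) / degS p k (mkS p k ξ))

/-- `D_n(f)` is `((q^{n|f|}−1)/n)` times the adjoint of multiplication by `p_n(f)`. -/
def IsDf (rep : PhiM p k → (Kbar p)ˣ)
    (Df : PhiM p k → ℕ → Module.End ℂ (Fock p k)) : Prop :=
  ∀ (f : PhiM p k) (n : ℕ), 0 < n → ∀ u v : Fock p k,
    form p k (Df f n u) v =
      ((qC p k ^ (n * degM p k f) - 1) / n) * form p k u (pFrep p k (rep f) n * v)

/-- `exp(∑_{n≥1} ((q^{n|f|}−1)/n) p_n(f) z^n)`. -/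
def qfPlusSeries (rep : PhiM p k → (Kbar p)ˣ) (f : PhiM p k) : PowerSeries (Fock p k) :=
  expOf ℂ (PowerSeries.mk fun n =>
    ((qC p k ^ (n * degM p k f) - 1) / n) • pFrep p k (rep f) n)

/-- `exp(−∑_{n≥1} q^{-n|f|} D_n(f) z^{-n})`. -/
def qfMinusSeries (Df : PhiM p k → ℕ → Module.End ℂ (Fock p k)) (f : PhiM p k) :
    PowerSeries (Module.End ℂ (Fock p k)) :=
  expOf ℂ (PowerSeries.mk fun n =>
    if n = 0 then 0 else (-((qC p k)⁻¹ ^ (n * degM p k f))) • Df f n)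

/-- `Qf` is the family of coefficients of the `f`-colored Hall–Littlewood operators:
`Q(f;z) = exp(∑ ((q^{n|f|}−1)/n) p_n(f) z^n) exp(−∑ q^{-n|f|} D_n(f) z^{-n}) = ∑_m Q_m(f) z^m`. -/
def IsQf (rep : PhiM p k → (Kbar p)ˣ) (Df : PhiM p k → ℕ → Module.End ℂ (Fock p k))
    (Qf : PhiM p k → ℤ → Module.End ℂ (Fock p k)) : Prop :=
  ∀ (f : PhiM p k) (m : ℤ) (v : Fock p k),
    Qf f m v = ∑ᶠ b : ℕ,
      (if 0 ≤ m + (b : ℤ) then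
          PowerSeries.coeff (m + (b : ℤ)).toNat (qfPlusSeries p k rep f)
        else 0) *
      (PowerSeries.coeff b (qfMinusSeries p k Df f) v)

/-- The trivial character, and its orbit `φ_1`. -/
def trivChar : Mstar p k := ⟨1, 1, one_pos, fun _ => rfl⟩

def phiOne : PhiStar p k := mkS p k (trivChar p k)

/-! ## Colored partitions and auxiliary symmetric-function data -/

/-- `z_λ` for a multiset-partition `s` (parts with multiplicity). -/
def zMult (s : Multiset ℕ) : ℂ :=
  ∏ i ∈ s.toFinset, (i : ℂ) ^ (s.count i) * (Nat.factorial (s.count i))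

/-- `z_λ` for `λ ⊢ n`. -/
def zPc {n : ℕ} (lam : n.Partition) : ℂ := zMult lam.parts

/-- A `Φ*`-colored partition: a finitely supported assignment of partitions
(multisets of positive integers) to orbits. -/
structure CPart : Type where
  parts : PhiStar p k → Multiset ℕ
  finite : (Function.support parts).Finite
  pos : ∀ φ, ∀ i ∈ parts φ, 0 < i

/-- The weight `‖λ̃‖ = ∑_φ |φ|·|λ̃(φ)|`. -/
def cwt (L : CPart p k) : ℕ := ∑ᶠ φ : PhiStar p k, degS p k φ * (L.parts φ).sum

/-- The colored power-sum monomial `p_{λ̃} = ∏_φ p_{λ̃(φ)}(φ)`. -/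
def cpMon (L : CPart p k) : Fock p k :=
  ∏ᶠ φ : PhiStar p k, ((L.parts φ).map (pGen p k φ)).prod

/-- `Z_{λ̃} = ∏_φ z_{λ̃(φ)}`. -/
def cZ (L : CPart p k) : ℂ := ∏ᶠ φ : PhiStar p k, zMult (L.parts φ)

/-- The one-row Schur (complete homogeneous) function
`h_r(φ) = ∑_{λ ⊢ r} p_λ(φ)/z_λ`. -/
def hRow (φ : PhiStar p k) (r : ℕ) : Fock p k :=
  ∑ lam : Nat.Partition r, (zPc lam)⁻¹ • ((lam.parts.map (pGen p k φ)).prod)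

/-! ## Chains of vertex operators and numerical data of partitions -/

/-- `S_{ν_1}(φ) ⋯ S_{ν_l}(φ)` for an integer sequence `ν`. -/
def SchainZ (S : PhiStar p k → ℤ → Module.End ℂ (Fock p k)) (φ : PhiStar p k)
    (ls : List ℤ) : Module.End ℂ (Fock p k) :=
  (ls.map (S φ)).prod

/-- `S_{ν_1}(φ) ⋯ S_{ν_l}(φ)` for a sequence of naturals. -/
def SchainN (S : PhiStar p k → ℤ → Module.End ℂ (Fock p k)) (φ : PhiStar p k)
    (ls : List ℕ) : Module.End ℂ (Fock p k) :=
  (ls.map fun a => S φ (a : ℤ)).prod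

/-- `Q_{μ_1} ⋯ Q_{μ_r}`. -/
def Qchain (Q : ℤ → Module.End ℂ (Fock p k)) (μ : List ℕ) : Module.End ℂ (Fock p k) :=
  (μ.map fun a => Q (a : ℤ)).prod

/-- `n(μ) = ∑_i (i−1) μ_i`. -/
def nmu (μ : List ℕ) : ℕ := ∑ i : Fin μ.length, (i : ℕ) * μ.get i

/-- The structure constants `A(t;1) = −t`, `A(t;i) = t^i (t^{-1} − 1)` for `i > 1`. -/
def Acoef (t : ℂ) (i : ℕ) : ℂ := if i = 1 then -t else t ^ i * (t⁻¹ - 1)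

/-- The structure constants `B(t;1) = −1`, `B(t;i) = t^{-1} − 1` for `i > 1`. -/
def Bcoef (t : ℂ) (i : ℕ) : ℂ := if i = 1 then -1 else t⁻¹ - 1

/-- Expansion coefficients of `(w_i−w_j)/(w_i−q^{-1}w_j) = ∑_k ccq q k (w_j/w_i)^k`. -/
def ccq (q : ℂ) (j : ℕ) : ℂ := if j = 0 then 1 else (q⁻¹) ^ j * (1 - q)

/-- Expansion coefficients of `(1 − w_j/w_i) = ∑_k ccsign k (w_j/w_i)^k`. -/
def ccsign (j : ℕ) : ℂ := if j = 0 then 1 else if j = 1 then -1 else 0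

/-- The coefficient of `w_1^{α_1} ⋯ w_r^{α_r}` in
`e_m(w_1^{ee},…,w_r^{ee}) · ∏_{i<j} (∑_k cc k (w_j/w_i)^k)`,
expanded in the iterated Laurent series ring `ℂ((w_r))⋯((w_1))`. -/
def eCoeff (cc : ℕ → ℂ) {r : ℕ} (ee m : ℕ) (α : Fin r → ℤ) : ℂ :=
  ∑ᶠ T : Finset (Fin r), ∑ᶠ kf : Fin r → Fin r → ℕ,
    if T.card = m ∧ (∀ i j : Fin r, ¬ i < j → kf i j = 0) ∧
        (∀ i : Fin r, α i = (if i ∈ T then (ee : ℤ) else 0)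
          + (∑ j : Fin r, (kf j i : ℤ)) - ∑ j : Fin r, (kf i j : ℤ))
    then ∏ i : Fin r, ∏ j : Fin r, cc (kf i j)
    else 0

/-- The character value `X(ν̃, κ) = q^{n(κ)} ⟨∏_φ S_{ν̃(φ)}(φ)·1, Q_{κ_1}⋯Q_{κ_s}·1⟩`,
with the product over the colors listed in `cs`. -/
def Xval (S : PhiStar p k → ℤ → Module.End ℂ (Fock p k))
    (Q : ℤ → Module.End ℂ (Fock p k)) (cs : List (PhiStar p k))
    (ν : PhiStar p k → List ℤ) (κ : List ℕ) : ℂ :=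
  (qC p k) ^ (nmu κ) *
    form p k (((cs.map fun φ => SchainZ p k S φ (ν φ)).prod) 1) (Qchain p k Q κ 1)

/-!
Every Frobenius-periodic character of the divisible group `𝔽̄_q^×` is trivial, so `Φ*` is a single
orbit and `p_n(f_1) = (-1)^{n-1} p_n(φ) / (q^n - 1)`. Hence `D_n` kills `1` and `Q_n · 1` is the
elementary symmetric function `e_n(φ)`, the `z^n`-coefficient of
`exp (∑_j (-1)^{j-1} p_j(φ) z^j / j)`.

Multiplication by `p_j(φ)` is adjoint to `j ∂/∂p_j(φ)`, and
`∂/∂p_j(φ) e_n = (-1)^{j-1} e_{n-j} / j`, so pairing with `e_n(φ)` is the `t^n`-coefficient of the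
specialization `p_j(φ) ↦ (-1)^{j-1} t^j`. This specialization maps `exp (∑_j p_j(φ) z^j / j)` to
`exp (log (1 + t z)) = 1 + t z`, so it sends `S_m(φ) v` (for `m ≥ 1`) to `t` times the image of `v`
if `m = 1` and to `0` otherwise. Therefore `S_λ(φ) · 1` specializes to `t^m` if `λ = (1^m)` and
to `0` otherwise.
-/

section FormalExp

section Ring

variable {𝕜 A : Type} [Field 𝕜] [Ring A] [Algebra 𝕜 A]

theorem coeff_expOf (B : PowerSeries A) (n : ℕ) :
    PowerSeries.coeff n (expOf 𝕜 B) =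
      ∑ j ∈ Finset.range (n + 1), ((j.factorial : 𝕜))⁻¹ • PowerSeries.coeff n (B ^ j) :=
  PowerSeries.coeff_mk _ _

@[simp]
theorem coeff_zero_expOf (B : PowerSeries A) : PowerSeries.coeff 0 (expOf 𝕜 B) = 1 := by
  simp [coeff_expOf]

theorem expOf_zero : expOf 𝕜 (0 : PowerSeries A) = 1 := by
  ext n
  rw [coeff_expOf, Finset.sum_eq_single 0 (fun j _ hj => by rw [zero_pow hj, map_zero, smul_zero])
    (by simp)]
  simp

theorem map_expOf {A' : Type} [Ring A'] [Algebra 𝕜 A'] (f : A →ₐ[𝕜] A') (B : PowerSeries A) :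
    PowerSeries.map (f : A →+* A') (expOf 𝕜 B) = expOf 𝕜 (PowerSeries.map (f : A →+* A') B) := by
  ext n
  simp only [PowerSeries.coeff_map, coeff_expOf, map_sum, ← map_pow]
  exact Finset.sum_congr rfl fun j _ => map_smul f _ _

/-- `W w v` stands for "`v` has degree `≤ w`". -/
theorem coeff_expOf_apply_eq_zero_of_lt {V : Type} [AddCommGroup V] [Module 𝕜 V]
    {B : PowerSeries (Module.End 𝕜 V)} (W : ℕ → V → Prop)
    (hB : ∀ n w v, W w v →
      W (w - n) (PowerSeries.coeff n B v) ∧ (w < n → PowerSeries.coeff n B v = 0))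
    {w r : ℕ} {v : V} (hv : W w v) (hr : w < r) : PowerSeries.coeff r (expOf 𝕜 B) v = 0 := by
  have hpow : ∀ (j : ℕ) r w v, W w v → w < r → PowerSeries.coeff r (B ^ j) v = 0 := by
    intro j
    induction j with
    | zero => intro r w v _ hr; simp [PowerSeries.coeff_one, Nat.ne_zero_of_lt hr]
    | succ j ih =>
      intro r w v hv hr
      rw [pow_succ, PowerSeries.coeff_mul, LinearMap.sum_apply]
      refine Finset.sum_eq_zero fun ⟨a, b⟩ hab => ?_
      rw [Finset.HasAntidiagonal.mem_antidiagonal] at hab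
      rw [Module.End.mul_apply]
      by_cases hb : w < b
      · rw [(hB b w v hv).2 hb, map_zero]
      · exact ih a (w - b) _ (hB b w v hv).1 (by omega)
  rw [coeff_expOf, LinearMap.sum_apply]
  exact Finset.sum_eq_zero fun j _ => by rw [LinearMap.smul_apply, hpow j r w v hv hr, smul_zero]

end Ring

variable {𝕜 A : Type} [Field 𝕜] [CommRing A] [Algebra 𝕜 A]

theorem coeff_pow_eq_zero_of_lt {B : PowerSeries A} (hB : PowerSeries.constantCoeff B = 0)
    {n r : ℕ} (h : n < r) : PowerSeries.coeff n (B ^ r) = 0 :=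
  PowerSeries.X_pow_dvd_iff.mp (pow_dvd_pow_of_dvd (PowerSeries.X_dvd_iff.mpr hB) r) n h

variable (𝕜) in
def expTrunc (B : PowerSeries A) (N : ℕ) : PowerSeries A :=
  ∑ r ∈ Finset.range N, ((r.factorial : 𝕜))⁻¹ • B ^ r

theorem coeff_expOf_eq_coeff_expTrunc {B : PowerSeries A} (hB : PowerSeries.constantCoeff B = 0)
    {n N : ℕ} (h : n < N) :
    PowerSeries.coeff n (expOf 𝕜 B) = PowerSeries.coeff n (expTrunc 𝕜 B N) := by
  rw [coeff_expOf, expTrunc, map_sum]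
  simp only [PowerSeries.coeff_smul]
  refine Finset.sum_subset (Finset.range_subset_range.mpr h) fun r _ hr => ?_
  rw [Finset.mem_range, not_lt] at hr
  rw [coeff_pow_eq_zero_of_lt hB (by omega), smul_zero]

theorem derivation_expTrunc_succ [CharZero 𝕜] (δ : Derivation 𝕜 (PowerSeries A) (PowerSeries A))
    (B : PowerSeries A) (N : ℕ) : δ (expTrunc 𝕜 B (N + 1)) = δ B * expTrunc 𝕜 B N := by
  rw [expTrunc, Finset.sum_range_succ', expTrunc, Finset.mul_sum, map_add, map_sum, pow_zero,
    Derivation.map_smul, Derivation.map_one_eq_zero, smul_zero, add_zero]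
  refine Finset.sum_congr rfl fun r _ => ?_
  rw [Derivation.map_smul, Derivation.leibniz_pow, Nat.add_sub_cancel, smul_eq_mul,
    mul_comm (B ^ r), ← Nat.cast_smul_eq_nsmul 𝕜, smul_smul, mul_smul_comm]
  congr 1
  rw [Nat.factorial_succ, Nat.cast_mul, mul_inv, mul_right_comm,
    inv_mul_cancel₀ (Nat.cast_ne_zero.mpr r.succ_ne_zero), one_mul]

theorem derivation_expOf [CharZero 𝕜] (δ : Derivation 𝕜 (PowerSeries A) (PowerSeries A))
    (hδ : ∀ (F : PowerSeries A) n, PowerSeries.coeff n F = 0 → PowerSeries.coeff n (δ F) = 0)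
    {B : PowerSeries A} (hB : PowerSeries.constantCoeff B = 0) :
    δ (expOf 𝕜 B) = δ B * expOf 𝕜 B := by
  have hloc : ∀ n F G, PowerSeries.coeff n F = PowerSeries.coeff n G →
      PowerSeries.coeff n (δ F) = PowerSeries.coeff n (δ G) := fun n F G h =>
    sub_eq_zero.mp (by rw [← map_sub, ← map_sub]; exact hδ _ n (by rw [map_sub, h, sub_self]))
  have hδB : PowerSeries.coeff 0 (δ B) = 0 :=
    hδ B 0 (by rwa [PowerSeries.coeff_zero_eq_constantCoeff])
  ext n
  calc PowerSeries.coeff n (δ (expOf 𝕜 B))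
        = PowerSeries.coeff n (δ (expTrunc 𝕜 B (n + 1))) :=
          hloc n _ _ (coeff_expOf_eq_coeff_expTrunc hB n.lt_succ_self)
    _ = PowerSeries.coeff n (δ B * expTrunc 𝕜 B n) := by rw [derivation_expTrunc_succ]
    _ = PowerSeries.coeff n (δ B * expOf 𝕜 B) := by
        rw [PowerSeries.coeff_mul, PowerSeries.coeff_mul]
        refine Finset.sum_congr rfl fun ⟨a, b⟩ hab => ?_
        rw [Finset.HasAntidiagonal.mem_antidiagonal] at hab
        rcases Nat.eq_zero_or_pos a with rfl | ha
        · rw [hδB, zero_mul, zero_mul]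
        · rw [coeff_expOf_eq_coeff_expTrunc hB (by omega : b < n)]

end FormalExp

section PowerSeriesDerivations

variable {𝕜 A : Type} [Field 𝕜] [CommRing A] [Algebra 𝕜 A]

def mapCoeffsDerivation (d : Derivation 𝕜 A A) :
    Derivation 𝕜 (PowerSeries A) (PowerSeries A) where
  toFun F := PowerSeries.mk fun n => d (PowerSeries.coeff n F)
  map_add' F G := by ext n; simp
  map_smul' c F := by ext n; simp
  map_one_eq_zero' := by ext n; by_cases hn : n = 0 <;> simp [PowerSeries.coeff_one, hn]
  leibniz' F G := by
    ext n
    simp only [smul_eq_mul, mul_comm G, LinearMap.coe_mk, AddHom.coe_mk, map_add,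
      PowerSeries.coeff_mk, PowerSeries.coeff_mul, map_sum, ← Finset.sum_add_distrib]
    refine Finset.sum_congr rfl fun x _ => ?_
    rw [Derivation.leibniz, smul_eq_mul, smul_eq_mul]
    ring

@[simp]
theorem coeff_mapCoeffsDerivation (d : Derivation 𝕜 A A) (F : PowerSeries A) (n : ℕ) :
    PowerSeries.coeff n (mapCoeffsDerivation d F) = d (PowerSeries.coeff n F) := by
  simp [mapCoeffsDerivation]

variable (𝕜 A) in
def eulerDerivation : Derivation 𝕜 (PowerSeries A) (PowerSeries A) :=
  (PowerSeries.X : PowerSeries A) • (PowerSeries.derivative A).restrictScalars 𝕜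

theorem coeff_eulerDerivation (F : PowerSeries A) (n : ℕ) :
    PowerSeries.coeff n (eulerDerivation 𝕜 A F) = (n : 𝕜) • PowerSeries.coeff n F := by
  rw [eulerDerivation, Derivation.smul_apply, Derivation.restrictScalars_apply, smul_eq_mul]
  rcases n with _ | n
  · simp
  · rw [PowerSeries.coeff_succ_X_mul, PowerSeries.coeff_derivative, mul_comm,
      Nat.cast_smul_eq_nsmul, nsmul_eq_mul, Nat.cast_succ]

end PowerSeriesDerivations

section ExpLog

variable {𝕜 A : Type} [Field 𝕜] [CharZero 𝕜] [CommRing A] [Algebra 𝕜 A]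

variable (𝕜) in
/-- `log (1 + a z)`; the `j = 0` coefficient is `1/0 = 0`. -/
def logOneAddSeries (a : A) : PowerSeries A :=
  PowerSeries.mk fun j => ((-1 : 𝕜) ^ (j - 1) / j) • a ^ j

theorem coeff_eulerDerivation_logOneAddSeries (a : A) (j : ℕ) :
    PowerSeries.coeff j (eulerDerivation 𝕜 A (logOneAddSeries 𝕜 a)) =
      if j = 0 then 0 else (-1 : 𝕜) ^ (j - 1) • a ^ j := by
  rw [coeff_eulerDerivation, logOneAddSeries, PowerSeries.coeff_mk, smul_smul]
  split_ifs with hj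
  · simp [hj]
  · rw [mul_div_cancel₀ _ (Nat.cast_ne_zero.mpr hj)]

theorem coeff_expOf_logOneAddSeries (a : A) (n : ℕ) :
    PowerSeries.coeff n (expOf 𝕜 (logOneAddSeries 𝕜 a)) =
      if n = 0 then 1 else if n = 1 then a else 0 := by
  set E := expOf 𝕜 (logOneAddSeries 𝕜 a)
  have hB : PowerSeries.constantCoeff (logOneAddSeries 𝕜 a) = 0 := by
    simp [logOneAddSeries, ← PowerSeries.coeff_zero_eq_constantCoeff_apply]
  have hrec : ∀ n : ℕ, (n : 𝕜) • PowerSeries.coeff n E = ∑ i ∈ Finset.range (n + 1),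
      PowerSeries.coeff i (eulerDerivation 𝕜 A (logOneAddSeries 𝕜 a)) *
        PowerSeries.coeff (n - i) E := by
    intro n
    rw [← coeff_eulerDerivation, derivation_expOf _
      (fun F n h => by rw [coeff_eulerDerivation, h, smul_zero]) hB, PowerSeries.coeff_mul,
      Finset.Nat.sum_antidiagonal_eq_sum_range_succ
        (fun i j => PowerSeries.coeff i _ * PowerSeries.coeff j _)]
  induction n using Nat.strong_induction_on with
  | _ n ih =>
    match n with
    | 0 => exact coeff_zero_expOf _
    | 1 => simpa [Finset.sum_range_succ, coeff_eulerDerivation_logOneAddSeries, E] using hrec 1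
    | m + 2 =>
      have h2 := hrec (m + 2)
      rw [Finset.sum_range_succ, Finset.sum_range_succ, Finset.sum_eq_zero] at h2
      · rw [Nat.add_sub_add_left, Nat.sub_self, ih 1 (by omega), ih 0 (by omega),
          coeff_eulerDerivation_logOneAddSeries, coeff_eulerDerivation_logOneAddSeries] at h2
        have hsum : (-1 : 𝕜) ^ m • a ^ (m + 1) * a + (-1 : 𝕜) ^ (m + 1) • a ^ (m + 2) = 0 := by
          rw [smul_mul_assoc, ← pow_succ, pow_succ (-1 : 𝕜), mul_neg_one, neg_smul, add_neg_cancel]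
        simp only [one_ne_zero, (by omega : m + 2 - 1 = m + 1), if_false, if_true, zero_add,
          mul_one] at h2
        rw [if_neg (by omega), if_neg (by omega), Nat.add_sub_cancel, hsum, smul_eq_zero,
          Nat.cast_eq_zero] at h2
        rw [h2.resolve_left (by omega), if_neg (by omega), if_neg (by omega)]
      · intro i hi
        rw [Finset.mem_range] at hi
        rcases i with _ | i
        · rw [coeff_eulerDerivation_logOneAddSeries, if_pos rfl, zero_mul]
        · rw [ih _ (by omega), if_neg (by omega), if_neg (by omega), mul_zero]

end ExpLog

theorem MonoidHom.eq_one_of_pow_eq_one {G H : Type} [Monoid G] [Monoid H] {N : ℕ}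
    (hG : ∀ x : G, ∃ y, y ^ N = x) (f : G →* H) (hf : ∀ x, f x ^ N = 1) : f = 1 := by
  ext x
  obtain ⟨y, rfl⟩ := hG x
  rw [map_pow, hf, MonoidHom.one_apply]

theorem Units.exists_pow_eq_of_isAlgClosed {K : Type} [Field K] [IsAlgClosed K] {N : ℕ}
    (hN : 0 < N) (x : Kˣ) : ∃ y : Kˣ, y ^ N = x := by
  obtain ⟨z, hz⟩ := IsAlgClosed.exists_pow_nat_eq (x : K) hN
  have hz0 : z ≠ 0 := by
    rintro rfl
    exact x.ne_zero (hz ▸ zero_pow hN.ne')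
  exact ⟨Units.mk0 z hz0, Units.ext (by simpa using hz)⟩

section TrivialCharacters

variable {p k}

theorem frobM_iterate_apply (d : ℕ) (x : (Kbar p)ˣ) :
    (⇑(frobM p k))^[d] x = x ^ (p ^ k) ^ d := by
  induction d with
  | zero => simp
  | succ d ih =>
    rw [Function.iterate_succ_apply', ih, frobM, powMonoidHom_apply, ← pow_mul, pow_succ]

/-- `𝔽̄_q^×` is divisible, while a character fixed by `F^d` is killed by `q^d - 1`. -/
theorem Mstar_val_eq_one (hk : 0 < k) (ξ : Mstar p k) : ξ.1 = 1 := by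
  obtain ⟨d, hd, hξ⟩ := ξ.2
  have hq : 1 < (p ^ k) ^ d :=
    Nat.one_lt_pow hd.ne' (Nat.one_lt_pow hk.ne' (Fact.out : p.Prime).one_lt)
  refine MonoidHom.eq_one_of_pow_eq_one (N := (p ^ k) ^ d - 1)
    (Units.exists_pow_eq_of_isAlgClosed (by omega)) ξ.1 fun x => ?_
  have hx := hξ x
  rw [frobM_iterate_apply, map_pow, ← Nat.sub_add_cancel hq.le, pow_succ] at hx
  exact mul_eq_right.mp hx

variable (p) in
theorem subsingleton_PhiStar (hk : 0 < k) : Subsingleton (PhiStar p k) :=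
  have : Subsingleton (Mstar p k) :=
    ⟨fun ξ ψ => Subtype.ext ((Mstar_val_eq_one hk ξ).trans (Mstar_val_eq_one hk ψ).symm)⟩
  inferInstance

theorem qC_pow_ne_one (hk : 0 < k) {n : ℕ} (hn : 0 < n) : qC p k ^ n ≠ 1 := by
  rw [qC, ← pow_mul, ← Nat.cast_pow, Nat.cast_ne_one]
  exact (Nat.one_lt_pow (Nat.mul_ne_zero hk.ne' hn.ne') (Fact.out : p.Prime).one_lt).ne'

theorem pF1_eq_smul_pGen (hk : 0 < k) {φ : PhiStar p k} (hφ : degS p k φ = 1) (n : ℕ) :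
    pF1 p k n = ((-1 : ℂ) ^ (n - 1) / (qC p k ^ n - 1)) • pGen p k φ n := by
  have := subsingleton_PhiStar p hk
  rw [pF1, finsum_eq_single _ φ fun ψ hψ => (hψ (Subsingleton.elim ψ φ)).elim, hφ,
    finsum_eq_if, if_pos (one_dvd n), Nat.div_one, Nat.cast_one, one_smul]

end TrivialCharacters

section Form

variable {p k}

theorem Zval_eq_prod_of_support_subset (m : (PhiStar p k × ℕ+) →₀ ℕ)
    {s : Finset (PhiStar p k × ℕ+)} (hs : m.support ⊆ s) :
    Zval p k m = ∏ i ∈ s, ((i.2 : ℕ) : ℂ) ^ m i * (m i).factorial :=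
  Finsupp.prod_of_support_subset m hs (fun i e => ((i.2 : ℕ) : ℂ) ^ e * e.factorial)
    fun _ _ => by simp

theorem Zval_ne_zero (m : (PhiStar p k × ℕ+) →₀ ℕ) : Zval p k m ≠ 0 :=
  Finset.prod_ne_zero_iff.mpr fun i _ =>
    mul_ne_zero (pow_ne_zero _ (Nat.cast_ne_zero.mpr i.2.ne_zero))
      (Nat.cast_ne_zero.mpr (Nat.factorial_ne_zero _))

theorem Zval_add_single (m : (PhiStar p k × ℕ+) →₀ ℕ) (i : PhiStar p k × ℕ+) :
    Zval p k (m + Finsupp.single i 1) = ((i.2 : ℕ) : ℂ) * (m i + 1 : ℂ) * Zval p k m := by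
  classical
  set s := insert i m.support
  have hs : (m + Finsupp.single i 1).support ⊆ s :=
    Finsupp.support_add.trans (Finset.union_subset (Finset.subset_insert _ _)
      (Finsupp.support_single_subset.trans (by simp [s])))
  have hi : i ∈ s := Finset.mem_insert_self _ _
  rw [Zval_eq_prod_of_support_subset _ hs,
    Zval_eq_prod_of_support_subset m (Finset.subset_insert _ _),
    ← Finset.mul_prod_erase s _ hi, ← Finset.mul_prod_erase s _ hi,
    Finset.prod_congr rfl fun j hj => by
      rw [Finsupp.add_apply, Finsupp.single_eq_of_ne (Finset.ne_of_mem_erase hj), add_zero],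
    Finsupp.add_apply, Finsupp.single_eq_same, pow_succ, Nat.factorial_succ]
  push_cast
  ring

theorem form_eq_sum_of_support_subset (u v : Fock p k) {s : Finset ((PhiStar p k × ℕ+) →₀ ℕ)}
    (hs : u.support ⊆ s) : form p k u v = ∑ m ∈ s, coeff m u * coeff m v * Zval p k m :=
  Finset.sum_subset hs fun m _ hm => by rw [notMem_support_iff.mp hm, zero_mul, zero_mul]

theorem form_add_left (u u' v : Fock p k) :
    form p k (u + u') v = form p k u v + form p k u' v := by
  classical
  rw [form_eq_sum_of_support_subset _ _ support_add,
    form_eq_sum_of_support_subset u _ Finset.subset_union_left,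
    form_eq_sum_of_support_subset u' _ Finset.subset_union_right, ← Finset.sum_add_distrib]
  exact Finset.sum_congr rfl fun m _ => by rw [coeff_add]; ring

theorem form_C_left (a : ℂ) (v : Fock p k) : form p k (C a) v = a * coeff 0 v := by
  classical
  rw [form_eq_sum_of_support_subset (C a) _ (support_monomial_subset (s := 0) (a := a)),
    Finset.sum_singleton, coeff_C, if_pos rfl, Zval, Finsupp.support_zero, Finset.prod_empty,
    mul_one]

theorem form_smul_right (u v : Fock p k) (c : ℂ) : form p k u (c • v) = c * form p k u v := by
  rw [form, form, Finset.mul_sum]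
  exact Finset.sum_congr rfl fun m _ => by rw [coeff_smul, smul_eq_mul]; ring

theorem form_zero_right (u : Fock p k) : form p k u 0 = 0 := by
  simpa using form_smul_right u 0 0

theorem form_monomial_right (u : Fock p k) (m : (PhiStar p k × ℕ+) →₀ ℕ) :
    form p k u (monomial m 1) = coeff m u * Zval p k m := by
  classical
  rw [form_eq_sum_of_support_subset u _ (Finset.subset_insert m u.support),
    Finset.sum_eq_single_of_mem m (Finset.mem_insert_self _ _) fun m' _ hm' => by
      rw [coeff_monomial, if_neg (Ne.symm hm'), mul_zero, zero_mul],
    coeff_monomial, if_pos rfl, mul_one]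

theorem eq_zero_of_forall_form_eq_zero {u : Fock p k} (h : ∀ v, form p k u v = 0) : u = 0 := by
  ext m
  simpa [form_monomial_right, Zval_ne_zero] using h (monomial m 1)

theorem form_mul_X (u v : Fock p k) (i : PhiStar p k × ℕ+) :
    form p k (u * X i) v = ((i.2 : ℕ) : ℂ) * form p k u (pderiv i v) := by
  rw [form, support_mul_X, Finset.sum_map, form, Finset.mul_sum]
  refine Finset.sum_congr rfl fun m _ => ?_
  rw [addRightEmbedding_apply, coeff_mul_X, coeff_pderiv, Zval_add_single]
  ring

end Form

section WeightedDegree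

variable {σ R : Type} [CommSemiring R] (w : σ → ℕ)

theorem weight_add_le_of_mem_support_pderiv {f : MvPolynomial σ R} {i : σ} {m : σ →₀ ℕ}
    (hm : m ∈ (pderiv i f).support) :
    Finsupp.weight w m + w i ≤ weightedTotalDegree w f := by
  rw [mem_support_iff, coeff_pderiv] at hm
  simpa [Finsupp.weight_single] using
    le_weightedTotalDegree w (mem_support_iff.mpr (left_ne_zero_of_mul hm))

theorem weightedTotalDegree_pderiv_le (f : MvPolynomial σ R) (i : σ) :
    weightedTotalDegree w (pderiv i f) ≤ weightedTotalDegree w f - w i :=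
  Finset.sup_le fun _ hm => Nat.le_sub_of_add_le (weight_add_le_of_mem_support_pderiv w hm)

theorem pderiv_eq_zero_of_weightedTotalDegree_lt {f : MvPolynomial σ R} {i : σ}
    (h : weightedTotalDegree w f < w i) : pderiv i f = 0 := by
  by_contra hne
  obtain ⟨m, hm⟩ := support_nonempty.mpr hne
  have := weight_add_le_of_mem_support_pderiv w hm
  omega

end WeightedDegree

section SchurOperators

variable {p k}

def fockDegree (v : Fock p k) : ℕ :=
  weightedTotalDegree (fun i : PhiStar p k × ℕ+ => (i.2 : ℕ)) v

theorem fockDegree_derOp_le (φ : PhiStar p k) (n : ℕ) (v : Fock p k) :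
    fockDegree (derOp p k φ n v) ≤ fockDegree v - n := by
  unfold derOp
  split_ifs with hn
  · exact weightedTotalDegree_pderiv_le _ v (φ, ⟨n, hn⟩)
  · simp [fockDegree, weightedTotalDegree_zero]

theorem derOp_apply_eq_zero_of_lt {φ : PhiStar p k} {n : ℕ} {v : Fock p k}
    (h : fockDegree v < n) : derOp p k φ n v = 0 := by
  rw [derOp, dif_pos (by omega : 0 < n)]
  exact pderiv_eq_zero_of_weightedTotalDegree_lt _ h

theorem coeff_sMinusSeries_apply_eq_zero (φ : PhiStar p k) {r : ℕ} {v : Fock p k}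
    (hr : fockDegree v < r) : PowerSeries.coeff r (sMinusSeries p k φ) v = 0 := by
  refine coeff_expOf_apply_eq_zero_of_lt (fun w v => fockDegree v ≤ w) (fun n w v hv => ?_)
    le_rfl hr
  simp only [PowerSeries.coeff_mk, LinearMap.neg_apply, neg_eq_zero]
  refine ⟨?_, fun hn => derOp_apply_eq_zero_of_lt (by omega)⟩
  simpa [fockDegree, weightedTotalDegree] using (fockDegree_derOp_le φ n v).trans (by omega)

theorem coeff_zero_sMinusSeries_apply (φ : PhiStar p k) (v : Fock p k) :
    PowerSeries.coeff 0 (sMinusSeries p k φ) v = v := by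
  rw [sMinusSeries, coeff_zero_expOf, Module.End.one_apply]

theorem S_apply_eq_sum {S : PhiStar p k → ℤ → Module.End ℂ (Fock p k)} (hS : IsSOp p k S)
    (φ : PhiStar p k) (m : ℤ) (v : Fock p k) :
    S φ m v = ∑ r ∈ Finset.range (fockDegree v + 1),
      hElt p k φ (m + r) * PowerSeries.coeff r (sMinusSeries p k φ) v := by
  refine (hS φ m v).trans (finsum_eq_sum_of_support_subset _ fun r hr => ?_)
  by_contra hr'
  rw [Finset.coe_range, Set.mem_Iio, not_lt] at hr'
  exact hr (mul_eq_zero_of_right _ (coeff_sMinusSeries_apply_eq_zero φ (by omega)))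

end SchurOperators

section Specialization

variable {p k}

open scoped Classical

/-- It sends `e_n(φ)` to `t^n`, and `h_n(φ)` to `0` for `n ≥ 2`. -/
def colSpec (φ : PhiStar p k) : Fock p k →ₐ[ℂ] Polynomial ℂ :=
  aeval fun i => if i.1 = φ then (-1 : ℂ) ^ ((i.2 : ℕ) - 1) • Polynomial.X ^ (i.2 : ℕ) else 0

theorem colSpec_X (φ : PhiStar p k) (i : PhiStar p k × ℕ+) :
    colSpec φ (X i) =
      if i.1 = φ then (-1 : ℂ) ^ ((i.2 : ℕ) - 1) • Polynomial.X ^ (i.2 : ℕ) else 0 := by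
  rw [colSpec, aeval_X]

theorem colSpec_pGen (φ : PhiStar p k) {n : ℕ} (hn : 0 < n) :
    colSpec φ (pGen p k φ n) = (-1 : ℂ) ^ (n - 1) • Polynomial.X ^ n := by
  rw [pGen, dif_pos hn, colSpec_X, if_pos rfl]
  rfl

theorem map_colSpec_hSeries (φ : PhiStar p k) :
    PowerSeries.map (colSpec φ : Fock p k →+* Polynomial ℂ) (hSeries p k φ) =
      expOf ℂ (logOneAddSeries ℂ (Polynomial.X : Polynomial ℂ)) := by
  rw [hSeries, map_expOf, logOneAddSeries]
  congr 1
  ext j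
  rw [PowerSeries.coeff_map, PowerSeries.coeff_mk, PowerSeries.coeff_mk]
  rcases Nat.eq_zero_or_pos j with rfl | hj
  · simp [pGen]
  · rw [RingHom.coe_coe, map_smul, colSpec_pGen φ hj, smul_smul, div_eq_inv_mul]

theorem colSpec_hElt (φ : PhiStar p k) (a : ℤ) :
    colSpec φ (hElt p k φ a) = if a = 0 then 1 else if a = 1 then Polynomial.X else 0 := by
  by_cases ha : 0 ≤ a
  · rw [hElt, if_pos ha]
    lift a to ℕ using ha
    rw [Int.toNat_natCast, ← RingHom.coe_coe, ← PowerSeries.coeff_map, map_colSpec_hSeries,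
      coeff_expOf_logOneAddSeries]
    simp only [Nat.cast_eq_zero, Nat.cast_eq_one]
  · rw [hElt, if_neg ha, map_zero, if_neg (by omega), if_neg (by omega)]

theorem colSpec_S_apply {S : PhiStar p k → ℤ → Module.End ℂ (Fock p k)} (hS : IsSOp p k S)
    (φ : PhiStar p k) {m : ℤ} (hm : 1 ≤ m) (v : Fock p k) :
    colSpec φ (S φ m v) = if m = 1 then Polynomial.X * colSpec φ v else 0 := by
  have hterm : ∀ r : ℕ,
      colSpec φ (hElt p k φ (m + r) * PowerSeries.coeff r (sMinusSeries p k φ) v) =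
      if m = 1 ∧ r = 0 then Polynomial.X * colSpec φ v else 0 := by
    intro r
    rw [map_mul, colSpec_hElt, if_neg (by omega)]
    split_ifs with h1 h2 h2
    · rw [h2.2, coeff_zero_sMinusSeries_apply]
    · omega
    · omega
    · rw [zero_mul]
  rw [S_apply_eq_sum hS, map_sum, Finset.sum_congr rfl fun r _ => hterm r]
  split_ifs with h1
  · rw [Finset.sum_eq_single 0 (fun r _ hr => if_neg fun h => hr h.2) (by simp), if_pos ⟨h1, rfl⟩]
  · exact Finset.sum_eq_zero fun r _ => if_neg fun h => h1 h.1

theorem SchainN_cons (S : PhiStar p k → ℤ → Module.End ℂ (Fock p k)) (φ : PhiStar p k) (a : ℕ)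
    (lam : List ℕ) : SchainN p k S φ (a :: lam) = S φ a * SchainN p k S φ lam :=
  rfl

theorem colSpec_SchainN_one {S : PhiStar p k → ℤ → Module.End ℂ (Fock p k)} (hS : IsSOp p k S)
    (φ : PhiStar p k) (lam : List ℕ) (hpos : ∀ a ∈ lam, 0 < a) :
    colSpec φ (SchainN p k S φ lam 1) =
      if ∀ a ∈ lam, a = 1 then Polynomial.X ^ lam.length else 0 := by
  induction lam with
  | nil => simp [SchainN]
  | cons a lam ih =>
    rw [List.forall_mem_cons] at hpos
    rw [SchainN_cons, Module.End.mul_apply, colSpec_S_apply hS φ (by exact_mod_cast hpos.1),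
      ih hpos.2]
    by_cases ha : a = 1
    · simp [ha, pow_succ']
    · simp [ha]

end Specialization

section ElementarySeries

variable {p k}

open scoped Classical

/-- The generating series of the elementary symmetric functions `e_n(φ)`. -/
def eSeries (φ : PhiStar p k) : PowerSeries (Fock p k) :=
  expOf ℂ (PowerSeries.mk fun j => ((-1 : ℂ) ^ (j - 1) / j) • pGen p k φ j)

theorem constantCoeff_pGen (φ : PhiStar p k) (n : ℕ) : constantCoeff (pGen p k φ n) = 0 := by
  unfold pGen
  split_ifs <;> simp

theorem coeff_zero_coeff_eSeries (φ : PhiStar p k) (n : ℕ) :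
    coeff 0 (PowerSeries.coeff n (eSeries φ)) = if n = 0 then 1 else 0 := by
  let ε : Fock p k →ₐ[ℂ] ℂ := aeval 0
  have h := congrArg (PowerSeries.coeff n) (map_expOf ε
    (PowerSeries.mk fun j => ((-1 : ℂ) ^ (j - 1) / j) • pGen p k φ j))
  have h0 : PowerSeries.map (ε : Fock p k →+* ℂ)
      (PowerSeries.mk fun j => ((-1 : ℂ) ^ (j - 1) / j) • pGen p k φ j) = 0 := by
    ext j
    simp [ε, constantCoeff_pGen]
  rw [h0, expOf_zero, PowerSeries.coeff_map, PowerSeries.coeff_one] at h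
  simpa [ε, eSeries, ← constantCoeff_eq] using h

theorem pderiv_pGen (i : PhiStar p k × ℕ+) (φ : PhiStar p k) (n : ℕ) :
    pderiv i (pGen p k φ n) = if i.1 = φ ∧ (i.2 : ℕ) = n then 1 else 0 := by
  unfold pGen
  split_ifs with hn h h
  · obtain ⟨rfl, rfl⟩ := h
    exact pderiv_X_self i
  · exact pderiv_X_of_ne fun hi =>
      h ⟨(congrArg Prod.fst hi).symm, (congrArg (fun j => (j.2 : ℕ)) hi).symm⟩
  · exact absurd h.2 (by have := i.2.pos; omega)
  · exact map_zero _

theorem pderiv_coeff_eSeries (φ : PhiStar p k) (i : PhiStar p k × ℕ+) (n : ℕ) :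
    pderiv i (PowerSeries.coeff n (eSeries φ)) =
      if i.1 = φ ∧ (i.2 : ℕ) ≤ n then
        ((-1 : ℂ) ^ ((i.2 : ℕ) - 1) / (i.2 : ℕ)) • PowerSeries.coeff (n - i.2) (eSeries φ)
      else 0 := by
  set c : ℂ := (-1 : ℂ) ^ ((i.2 : ℕ) - 1) / (i.2 : ℕ)
  set B : PowerSeries (Fock p k) := PowerSeries.mk fun j => ((-1 : ℂ) ^ (j - 1) / j) • pGen p k φ j
  have hB : PowerSeries.constantCoeff B = 0 := by
    simp [B, pGen, ← PowerSeries.coeff_zero_eq_constantCoeff_apply]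
  have hδB : mapCoeffsDerivation (pderiv i) B =
      if i.1 = φ then PowerSeries.C (C c) * PowerSeries.X ^ (i.2 : ℕ) else 0 := by
    refine PowerSeries.ext fun j => ?_
    rw [coeff_mapCoeffsDerivation, PowerSeries.coeff_mk, Derivation.map_smul, pderiv_pGen]
    split_ifs with h hi hi
    · obtain ⟨-, rfl⟩ := h
      rw [PowerSeries.coeff_C_mul_X_pow, if_pos rfl, smul_eq_C_mul, mul_one]
    · exact absurd h.1 hi
    · rw [PowerSeries.coeff_C_mul_X_pow, if_neg fun hj => h ⟨hi, hj.symm⟩, smul_zero]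
    · rw [smul_zero, map_zero]
  have h := congrArg (PowerSeries.coeff n) (derivation_expOf (mapCoeffsDerivation (pderiv i))
    (fun F n h => by rw [coeff_mapCoeffsDerivation, h, map_zero]) hB)
  rw [coeff_mapCoeffsDerivation] at h
  rw [eSeries, h, hδB]
  by_cases hi : i.1 = φ
  · rw [if_pos hi, mul_assoc, PowerSeries.coeff_C_mul, PowerSeries.coeff_X_pow_mul']
    split_ifs with h1 h2 h2
    · rw [smul_eq_C_mul]
    · exact absurd ⟨hi, h1⟩ h2
    · exact absurd h2.2 h1
    · rw [mul_zero]
  · rw [if_neg hi, if_neg fun h => hi h.1, zero_mul, map_zero]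

theorem form_coeff_eSeries (φ : PhiStar p k) (u : Fock p k) (n : ℕ) :
    form p k u (PowerSeries.coeff n (eSeries φ)) = (colSpec φ u).coeff n := by
  induction u using MvPolynomial.induction_on generalizing n with
  | C a =>
    rw [form_C_left, coeff_zero_coeff_eSeries, colSpec, aeval_C, Polynomial.algebraMap_eq,
      Polynomial.coeff_C]
    split_ifs <;> simp
  | add u u' hu hu' => rw [form_add_left, map_add, Polynomial.coeff_add, hu, hu']
  | mul_X u i hu =>
    rw [form_mul_X, pderiv_coeff_eSeries, map_mul, colSpec_X]
    by_cases hi : i.1 = φ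
    · rw [if_pos hi, mul_smul_comm, Polynomial.coeff_smul, Polynomial.coeff_mul_X_pow',
        smul_eq_mul]
      by_cases hn : (i.2 : ℕ) ≤ n
      · rw [if_pos ⟨hi, hn⟩, if_pos hn, form_smul_right, hu, ← mul_assoc,
          mul_div_cancel₀ _ (Nat.cast_ne_zero.mpr i.2.ne_zero)]
      · rw [if_neg (fun h => hn h.2), if_neg hn, form_zero_right, mul_zero, mul_zero]
    · rw [if_neg (fun h => hi h.1), if_neg hi, form_zero_right, mul_zero, mul_zero,
        Polynomial.coeff_zero]

end ElementarySeries

section HallLittlewood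

variable {p k}

theorem qPlusSeries_eq_eSeries (hk : 0 < k) {φ : PhiStar p k} (hφ : degS p k φ = 1) :
    qPlusSeries p k = eSeries φ := by
  rw [qPlusSeries, eSeries]
  congr 1
  refine PowerSeries.ext fun j => ?_
  rw [PowerSeries.coeff_mk, PowerSeries.coeff_mk, pF1_eq_smul_pGen hk hφ, smul_smul]
  rcases Nat.eq_zero_or_pos j with rfl | hj
  · simp [pGen]
  · congr 1
    field_simp [sub_ne_zero.mpr (qC_pow_ne_one hk hj)]

theorem D_apply_one (hk : 0 < k) {φ : PhiStar p k} (hφ : degS p k φ = 1)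
    {D : ℕ → Module.End ℂ (Fock p k)} (hD : IsD p k D) {n : ℕ} (hn : 0 < n) : D n 1 = 0 :=
  eq_zero_of_forall_form_eq_zero fun v => by
    rw [hD n hn, ← C_1, form_C_left, one_mul, ← constantCoeff_eq, map_mul,
      pF1_eq_smul_pGen hk hφ, smul_eq_C_mul, map_mul, constantCoeff_pGen, mul_zero, zero_mul,
      mul_zero]

theorem coeff_qMinusSeries_apply_one (hk : 0 < k) {φ : PhiStar p k} (hφ : degS p k φ = 1)
    {D : ℕ → Module.End ℂ (Fock p k)} (hD : IsD p k D) (b : ℕ) :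
    PowerSeries.coeff b (qMinusSeries p k D) 1 = if b = 0 then 1 else 0 := by
  split_ifs with hb
  · rw [hb, qMinusSeries, coeff_zero_expOf, Module.End.one_apply]
  set B : PowerSeries (Module.End ℂ (Fock p k)) :=
    PowerSeries.mk fun n => if n = 0 then 0 else (-((qC p k)⁻¹ ^ n)) • D n
  have hB1 : ∀ n, PowerSeries.coeff n B 1 = 0 := fun n => by
    rw [PowerSeries.coeff_mk]
    split_ifs with hn
    · rfl
    · rw [LinearMap.smul_apply, D_apply_one hk hφ hD (Nat.pos_of_ne_zero hn), smul_zero]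
  exact coeff_expOf_apply_eq_zero_of_lt (fun _ v => ∀ n, PowerSeries.coeff n B v = 0)
    (fun n _ v hv => ⟨fun m => by rw [hv n, map_zero], fun _ => hv n⟩) hB1
    (Nat.pos_of_ne_zero hb)

theorem Q_apply_one (hk : 0 < k) {φ : PhiStar p k} (hφ : degS p k φ = 1)
    {D : ℕ → Module.End ℂ (Fock p k)} (hD : IsD p k D) {Q : ℤ → Module.End ℂ (Fock p k)}
    (hQ : IsQ p k D Q) (n : ℕ) : Q n 1 = PowerSeries.coeff n (eSeries φ) := by
  rw [hQ, finsum_eq_single _ 0 fun b hb => by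
      rw [coeff_qMinusSeries_apply_one hk hφ hD, if_neg hb, mul_zero],
    coeff_qMinusSeries_apply_one hk hφ hD, if_pos rfl, mul_one, qPlusElt, if_pos (by omega),
    qPlusSeries_eq_eSeries hk hφ]
  rfl

end HallLittlewood

theorem stmt_9_general (p k : ℕ) [Fact p.Prime] (hk : 0 < k) (φ : PhiStar p k)
    (hd1 : degS p k φ = 1)
    (S : PhiStar p k → ℤ → Module.End ℂ (Fock p k)) (hS : IsSOp p k S)
    (D : ℕ → Module.End ℂ (Fock p k)) (hD : IsD p k D)
    (Qop : ℤ → Module.End ℂ (Fock p k)) (hQ : IsQ p k D Qop)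
    (lam : List ℕ) (hpos : ∀ a ∈ lam, 0 < a)
    (n : ℕ) (hn : n = lam.sum) :
    form p k (SchainN p k S φ lam 1) (Qop (n : ℤ) 1) =
      if ∀ a ∈ lam, a = 1 then (-1 : ℂ) ^ (lam.sum + n) else 0 := by
  rw [Q_apply_one hk hd1 hD hQ, form_coeff_eSeries, colSpec_SchainN_one hS φ lam hpos]
  split_ifs with hones
  · have hlen : lam.sum = lam.length := by
      rw [List.eq_replicate_iff.mpr ⟨rfl, hones⟩, List.sum_replicate, smul_eq_mul, mul_one,
        List.length_replicate]
    rw [Polynomial.coeff_X_pow, if_pos (hn.trans hlen), ← hn]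
    exact (Even.neg_one_pow ⟨n, rfl⟩).symm
  · exact Polynomial.coeff_zero n

/-- for `|φ| = 1` and a partition `λ ⊢ m`, with `n = m`,
`⟨S_{λ_1}(φ)⋯S_{λ_l}(φ)·1, Q_n·1⟩ = (−1)^{m+n}` if `λ = (1^m)` and `0` otherwise. -/
theorem stmt_9 (p k : ℕ) [Fact p.Prime] (hk : 0 < k) (φ : PhiStar p k)
    (hd1 : degS p k φ = 1)
    (S : PhiStar p k → ℤ → Module.End ℂ (Fock p k)) (hS : IsSOp p k S)
    (D : ℕ → Module.End ℂ (Fock p k)) (hD : IsD p k D)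
    (Qop : ℤ → Module.End ℂ (Fock p k)) (hQ : IsQ p k D Qop)
    (lam : List ℕ) (hsort : lam.Pairwise (· ≥ ·)) (hpos : ∀ a ∈ lam, 0 < a)
    (n : ℕ) (hn : n = lam.sum) :
    form p k (SchainN p k S φ lam 1) (Qop (n : ℤ) 1) =
      if ∀ a ∈ lam, a = 1 then (-1 : ℂ) ^ (lam.sum + n) else 0 :=
  stmt_9_general p k hk φ hd1 S hS D hD Qop hQ lam hpos n hn

end JW
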